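/- For every r ∈ (0, 1/2), the ℚ-linear span of the Cantor-like set C_r is all of ℝ. -/
import Mathlib


open MeasureTheory Filter Set
open scoped ENNReal Pointwise Cardinal
open scoped Topology

/-- Left endpoint of the basic interval of the ratio-`r` Cantor construction indexed by a
binary string `w` (each bit selects the left or right subinterval of relative length `r`). -/
def leftEnd (r : ℝ) : List Bool → ℝ
  | [] => 0
  | b :: w => (if b then 1 - r else 0) + r * leftEnd r w

/-- Stage `k` of the ratio-`r` Cantor construction: the union of the `2^k` closed
intervals of length `r^k` indexed by binary strings of length `k`. -/
def cantorStage (r : ℝ) (k : ℕ) : Set ℝ :=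
  ⋃ w ∈ {w : List Bool | w.length = k}, Set.Icc (leftEnd r w) (leftEnd r w + r ^ k)

/-- The Cantor-like set `C_r` with ratio `r` (for `r = 1/3` this is the middle-thirds set). -/
def cantorLikeSet (r : ℝ) : Set ℝ := ⋂ k, cantorStage r k

lemma leftEnd_ofFn (r : ℝ) (k : ℕ) (b : ℕ → Bool) :
    leftEnd r (List.ofFn (fun i : Fin k => b i)) =
      ∑ i ∈ Finset.range k, (if b i then (1 - r) * r ^ i else 0) := by
  induction k generalizing b with
  | zero => simp [leftEnd]
  | succ k ih =>
    rw [List.ofFn_succ, Finset.sum_range_succ']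
    show (if b 0 then 1 - r else 0) + r * leftEnd r (List.ofFn fun i : Fin k => b (i + 1)) = _
    rw [ih (fun i => b (i + 1)), Finset.mul_sum, add_comm]
    congr 1
    · apply Finset.sum_congr rfl
      intro i _
      split <;> ring
    · split <;> ring

lemma summable_bits (r : ℝ) (hr0 : 0 ≤ r) (hr1 : r < 1) (b : ℕ → Bool) :
    Summable (fun i => if b i then (1 - r) * r ^ i else 0) := by
  apply Summable.of_nonneg_of_le (fun i => ?_) (fun i => ?_)
    ((summable_geometric_of_lt_one hr0 hr1).mul_left (1 - r))
  · have h1r : (0:ℝ) ≤ 1 - r := by linarith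
    split
    · positivity
    · exact le_refl _
  · have h1r : (0:ℝ) ≤ 1 - r := by linarith
    split
    · exact le_refl _
    · positivity

lemma mem_cantor (r : ℝ) (hr0 : 0 < r) (hr1 : r < 1) (b : ℕ → Bool) :
    (∑' i, (if b i then (1 - r) * r ^ i else 0)) ∈ cantorLikeSet r := by
  have h1r : (0:ℝ) < 1 - r := by linarith
  set f : ℕ → ℝ := fun i => if b i then (1 - r) * r ^ i else 0 with hf
  have hsumm : Summable f := summable_bits r hr0.le hr1 b
  refine Set.mem_iInter.2 fun k => ?_
  refine Set.mem_iUnion₂.2 ⟨List.ofFn (fun i : Fin k => b i), by simp, ?_⟩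
  have hsplit := (Summable.sum_add_tsum_nat_add k hsumm).symm
  rw [leftEnd_ofFn]
  have htail0 : 0 ≤ ∑' i, f (i + k) := by
    apply tsum_nonneg
    intro i
    simp only [hf]
    split
    · positivity
    · exact le_refl _
  have htail1 : (∑' i, f (i + k)) ≤ r ^ k := by
    have hgeo : Summable (fun i : ℕ => (1 - r) * r ^ (i + k)) := by
      simpa [pow_add, mul_comm, mul_left_comm, mul_assoc] using
        ((summable_geometric_of_lt_one hr0.le hr1).mul_left ((1 - r) * r ^ k))
    have hle : (∑' i, f (i + k)) ≤ ∑' i : ℕ, (1 - r) * r ^ (i + k) := by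
      apply Summable.tsum_le_tsum _ (hsumm.comp_injective (add_left_injective k)) hgeo
      intro i
      simp only [hf, Function.comp]
      split
      · exact le_refl _
      · positivity
    refine hle.trans ?_
    have : ∑' i : ℕ, (1 - r) * r ^ (i + k) = ((1 - r) * r ^ k) * (1 - r)⁻¹ := by
      rw [← tsum_geometric_of_lt_one hr0.le hr1, ← tsum_mul_left]
      congr 1 with i
      ring
    rw [this]
    rw [mul_comm (1-r) (r^k), mul_assoc, mul_inv_cancel₀ h1r.ne', mul_one]
  have hgoal : (∑ i ∈ Finset.range k, if b i then (1 - r) * r ^ i else 0)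
      = ∑ i ∈ Finset.range k, f i := rfl
  constructor
  · rw [hgoal]; linarith
  · rw [hgoal]; linarith

lemma greedy (r : ℝ) (hr0 : 0 < r) (hr1 : r < 1) (n : ℕ) (hn : 1 ≤ (n : ℝ) * r)
    (t : ℝ) (ht0 : 0 ≤ t) (ht1 : t ≤ n / (1 - r)) :
    ∃ c : ℕ → ℕ, (∀ i, c i ≤ n) ∧ HasSum (fun i => (c i : ℝ) * r ^ i) t := by
  have h1r : (0:ℝ) < 1 - r := by linarith
  set M : ℝ := n / (1 - r) with hM
  set s : ℕ → ℝ := fun k => Nat.rec t (fun _ x => (x - min n ⌊x⌋₊) / r) k with hs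
  have hs0 : s 0 = t := rfl
  have hsucc : ∀ k, s (k + 1) = (s k - min n ⌊s k⌋₊) / r := fun k => rfl
  set c : ℕ → ℕ := fun k => min n ⌊s k⌋₊ with hc
  have hcn : ∀ i, c i ≤ n := fun i => min_le_left _ _
  -- invariant
  have hinv : ∀ k, 0 ≤ s k ∧ s k ≤ M := by
    intro k
    induction k with
    | zero => exact ⟨ht0, ht1⟩
    | succ k ih =>
      obtain ⟨h0, h1⟩ := ih
      have hfl : ((min n ⌊s k⌋₊ : ℕ) : ℝ) ≤ s k :=
        le_trans (by exact_mod_cast min_le_right n ⌊s k⌋₊) (Nat.floor_le h0)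
      constructor
      · rw [hsucc]
        apply div_nonneg _ hr0.le
        linarith
      · rw [hsucc]
        rw [div_le_iff₀ hr0]
        rcases le_or_gt ⌊s k⌋₊ n with h | h
        · have : min n ⌊s k⌋₊ = ⌊s k⌋₊ := min_eq_right h
          rw [this]
          have hlt : s k < (⌊s k⌋₊ : ℝ) + 1 := Nat.lt_floor_add_one _
          have hMr : 1 ≤ M * r := by
            rw [hM]
            rw [div_mul_eq_mul_div, le_div_iff₀ h1r]
            linarith
          linarith
        · have : min n ⌊s k⌋₊ = n := min_eq_left h.le
          rw [this]
          have hMn : M - n = M * r := by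
            rw [hM]; field_simp; ring
          linarith
  have hpart : ∀ k, ∑ i ∈ Finset.range k, (c i : ℝ) * r ^ i = t - r ^ k * s k := by
    intro k
    induction k with
    | zero => simp [hs0]
    | succ k ih =>
      rw [Finset.sum_range_succ, ih, hsucc]
      have : (c k : ℝ) = ((min n ⌊s k⌋₊ : ℕ) : ℝ) := rfl
      rw [this]
      field_simp
      ring
  have hsummc : Summable (fun i => (c i : ℝ) * r ^ i) := by
    apply Summable.of_nonneg_of_le (fun i => by positivity) (fun i => ?_)
      ((summable_geometric_of_lt_one hr0.le hr1).mul_left (n : ℝ))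
    exact mul_le_mul_of_nonneg_right (by exact_mod_cast hcn i) (by positivity)
  refine ⟨c, hcn, (hsummc.hasSum_iff_tendsto_nat).2 ?_⟩
  have hto : Tendsto (fun k => r ^ k * s k) atTop (𝓝 0) := by
    have hb : Tendsto (fun k : ℕ => M * r ^ k) atTop (𝓝 0) := by
      simpa using (tendsto_pow_atTop_nhds_zero_of_lt_one hr0.le hr1).const_mul M
    refine squeeze_zero (fun k => mul_nonneg (by positivity) (hinv k).1) (fun k => ?_) hb
    rw [mul_comm]
    exact mul_le_mul_of_nonneg_right (hinv k).2 (by positivity)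
  have hfin : Tendsto (fun k => t - r ^ k * s k) atTop (𝓝 (t - 0)) :=
    tendsto_const_nhds.sub hto
  simp only [hpart]
  simpa using hfin

lemma icc_subset_span (r : ℝ) (hr : r ∈ Set.Ioo (0 : ℝ) (1 / 2)) (x : ℝ)
    (hx : x ∈ Set.Icc (0:ℝ) 1) : x ∈ Submodule.span ℚ (cantorLikeSet r) := by
  obtain ⟨hr0, hr2⟩ := hr
  have hr1 : r < 1 := by linarith
  have h1r : (0:ℝ) < 1 - r := by linarith
  set n : ℕ := ⌈1 / r⌉₊ with hn
  have hnr : 1 ≤ (n : ℝ) * r := by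
    have h1 : (1:ℝ) / r ≤ n := Nat.le_ceil _
    rw [div_le_iff₀ hr0] at h1
    linarith
  have hnpos : 0 < n := by
    by_contra h
    push_neg at h
    interval_cases n
    simp at hnr
    linarith
  set t : ℝ := n * x / (1 - r) with ht
  have ht0 : 0 ≤ t := by
    apply div_nonneg _ h1r.le
    exact mul_nonneg (Nat.cast_nonneg n) hx.1
  have ht1 : t ≤ n / (1 - r) := by
    rw [ht, div_le_div_iff_of_pos_right h1r]
    nlinarith [hx.2, Nat.cast_nonneg (α := ℝ) n]
  obtain ⟨c, hcn, hsum⟩ := greedy r hr0 hr1 n hnr t ht0 ht1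
  -- the n bit-sequences
  set y : ℕ → ℝ := fun j => ∑' i, (if decide (j < c i) then (1 - r) * r ^ i else 0) with hy
  have hymem : ∀ j, y j ∈ cantorLikeSet r := fun j => mem_cantor r hr0 hr1 _
  -- counting identity
  have hcount : ∀ i, (∑ j ∈ Finset.range n, if decide (j < c i) then (1 - r) * r ^ i else 0)
      = (c i : ℝ) * ((1 - r) * r ^ i) := by
    intro i
    rw [← Finset.sum_filter]
    have hfilt : (Finset.range n).filter (fun j => decide (j < c i) = true)
        = Finset.range (c i) := by
      ext j
      simp only [Finset.mem_filter, Finset.mem_range, decide_eq_true_eq]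
      have := hcn i
      omega
    rw [hfilt, Finset.sum_const, Finset.card_range, nsmul_eq_mul]
  -- swap sums
  have hswap : ∑ j ∈ Finset.range n, y j = (1 - r) * t := by
    rw [hy]
    rw [← Summable.tsum_finsetSum (fun j _ => summable_bits r hr0.le hr1 (fun i => decide (j < c i)))]
    have : ∀ i : ℕ, (∑ j ∈ Finset.range n, if decide (j < c i) then (1 - r) * r ^ i else 0)
        = (1 - r) * ((c i : ℝ) * r ^ i) := by
      intro i; rw [hcount i]; ring
    rw [tsum_congr this]
    rw [tsum_mul_left, hsum.tsum_eq]
  have hnx : (n : ℝ) * x = ∑ j ∈ Finset.range n, y j := by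
    rw [hswap, ht]
    field_simp
  have hxval : x = ∑ j ∈ Finset.range n, ((1 / (n:ℚ)) • y j) := by
    have hne : (n : ℝ) ≠ 0 := by exact_mod_cast hnpos.ne'
    rw [← Finset.smul_sum, ← hnx]
    rw [Rat.smul_def]
    push_cast
    field_simp
  rw [hxval]
  exact Submodule.sum_mem _ fun j _ =>
    Submodule.smul_mem _ _ (Submodule.subset_span (hymem j))

theorem span_cantorLikeSet_eq_top (r : ℝ) (hr : r ∈ Set.Ioo (0 : ℝ) (1 / 2)) :
    Submodule.span ℚ (cantorLikeSet r) = ⊤ := by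
  rw [eq_top_iff]
  rintro x -
  set m : ℕ := ⌈|x|⌉₊ + 1 with hm
  have hmpos : (0:ℝ) < m := by positivity
  have hxm : |x| ≤ m := by
    calc |x| ≤ (⌈|x|⌉₊ : ℝ) := Nat.le_ceil _
      _ ≤ m := by exact_mod_cast Nat.le_succ _
  have habs : |x| ∈ Submodule.span ℚ (cantorLikeSet r) := by
    have h1 : |x| / m ∈ Set.Icc (0:ℝ) 1 := by
      constructor
      · positivity
      · rw [div_le_one hmpos]; exact hxm
    have h2 := icc_subset_span r hr _ h1
    have h3 : |x| = (m : ℚ) • (|x| / m) := by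
      rw [Rat.smul_def]
      push_cast
      field_simp
    rw [h3]
    exact Submodule.smul_mem _ _ h2
  rcases abs_choice x with h | h
  · rwa [← h]
  · rw [← neg_neg x, ← h]
    exact Submodule.neg_mem _ habs
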